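/- arXiv:1805.07111 — 2 statements merged into one kernel-verified Lean document; each statement's English description precedes it below -/
import Mathlib

section
/- If a = c = 0, 0 < b ≤ 1, d ≠ 0 (with -(1-b) ≤ d ≤ 1), then the set of fixed points of V in S² is exactly F₃ = {(x,y,z) ∈ S² : x = 0}, and for any initial point in S² the trajectory converges to a point of F₃. -/
/-!
The third coordinate gains `b x` at every step, so `V p = p` forces `x = 0`, and conversely `x = 0`
freezes all three coordinates. Along a trajectory in `S2` the third coordinate is therefore
nondecreasing and bounded by `1`, hence convergent; its increments `b xₙ` tend to `0`, so `xₙ → 0`,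
and `yₙ = 1 - xₙ - zₙ` converges too. The limit lies in the closed set `S2` and has `x = 0`.
-/

open Filter Topology

noncomputable def V (a b c d : ℝ) (p : ℝ × ℝ × ℝ) : ℝ × ℝ × ℝ :=
  (p.1 * (1 - b + d * p.2.1),
   p.2.1 * (1 - a - d * p.1 + c * p.2.2),
   p.2.2 * (1 - c * p.2.1) + a * p.2.1 + b * p.1)

def S2 : Set (ℝ × ℝ × ℝ) :=
  {p | 0 ≤ p.1 ∧ 0 ≤ p.2.1 ∧ 0 ≤ p.2.2 ∧ p.1 + p.2.1 + p.2.2 = 1}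

lemma V_zero_zero_apply (b d : ℝ) (p : ℝ × ℝ × ℝ) :
    V 0 b 0 d p = (p.1 * (1 - b + d * p.2.1), p.2.1 * (1 - d * p.1), p.2.2 + b * p.1) := by
  simp only [V]
  ring_nf

lemma V_zero_zero_eq_self_iff {b : ℝ} (hb : b ≠ 0) (d : ℝ) (p : ℝ × ℝ × ℝ) :
    V 0 b 0 d p = p ↔ p.1 = 0 := by
  rw [V_zero_zero_apply]
  constructor
  · intro h
    have hz : p.2.2 + b * p.1 = p.2.2 := congrArg (·.2.2) h
    simpa [hb] using hz
  · intro hx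
    ext <;> simp [hx]

lemma isClosed_S2 : IsClosed S2 :=
  (isClosed_le continuous_const continuous_fst).inter <|
    (isClosed_le continuous_const (continuous_fst.comp continuous_snd)).inter <|
      (isClosed_le continuous_const (continuous_snd.comp continuous_snd)).inter <|
        isClosed_eq (by fun_prop) continuous_const

lemma mapsTo_V_zero_zero_S2 {b d : ℝ} (hb0 : 0 < b) (hb1 : b ≤ 1) (hd1 : -(1 - b) ≤ d)
    (hd2 : d ≤ 1) : Set.MapsTo (V 0 b 0 d) S2 S2 := by
  rintro p ⟨hx, hy, hz, hs⟩
  rw [V_zero_zero_apply]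
  have hx1 : p.1 ≤ 1 := by linarith
  have hy1 : p.2.1 ≤ 1 := by linarith
  refine ⟨mul_nonneg hx ?_, mul_nonneg hy ?_, by positivity, by linear_combination hs⟩
  · rcases le_total 0 d with h | h <;> nlinarith
  · rcases le_total 0 d with h | h <;> nlinarith

lemma exists_tendsto_iterate_V_zero_zero {b d : ℝ} (hb0 : 0 < b) (hb1 : b ≤ 1)
    (hd1 : -(1 - b) ≤ d) (hd2 : d ≤ 1) {p : ℝ × ℝ × ℝ} (hp : p ∈ S2) :
    ∃ ζ : ℝ, Tendsto (fun n => (V 0 b 0 d)^[n] p) atTop (𝓝 (0, 1 - ζ, ζ)) := by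
  set o : ℕ → ℝ × ℝ × ℝ := fun n => (V 0 b 0 d)^[n] p
  have hS : ∀ n, o n ∈ S2 := fun n => (mapsTo_V_zero_zero_S2 hb0 hb1 hd1 hd2).iterate n hp
  have hsucc : ∀ n, (o (n + 1)).2.2 = (o n).2.2 + b * (o n).1 := fun n => by
    simp only [o, Function.iterate_succ_apply', V_zero_zero_apply]
  have hmono : Monotone fun n => (o n).2.2 := monotone_nat_of_le_succ fun n => by
    rw [hsucc]
    exact le_add_of_nonneg_right (mul_nonneg hb0.le (hS n).1)
  have hbdd : BddAbove (Set.range fun n => (o n).2.2) := by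
    refine ⟨1, ?_⟩
    rintro _ ⟨n, rfl⟩
    obtain ⟨hx, hy, -, hs⟩ := hS n
    linarith
  have hz := tendsto_atTop_ciSup hmono hbdd
  have hx : Tendsto (fun n => (o n).1) atTop (𝓝 0) := by
    have h := ((hz.comp (tendsto_add_atTop_nat 1)).sub hz).div_const b
    rw [sub_self, zero_div] at h
    refine h.congr fun n => ?_
    simp only [Function.comp_apply, hsucc]
    field_simp
    ring
  have hy : Tendsto (fun n => (o n).2.1) atTop (𝓝 (1 - ⨆ n, (o n).2.2)) := by
    have h := (tendsto_const_nhds (x := (1 : ℝ))).sub (hx.add hz)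
    rw [zero_add] at h
    exact h.congr fun n => by linarith [(hS n).2.2.2]
  exact ⟨_, hx.prodMk_nhds (hy.prodMk_nhds hz)⟩

theorem stmt8_general (b d : ℝ) (hb0 : 0 < b) (hb1 : b ≤ 1)
    (hd1 : -(1 - b) ≤ d) (hd2 : d ≤ 1) :
    {p ∈ S2 | V 0 b 0 d p = p} = {p ∈ S2 | p.1 = 0} ∧
    ∀ p ∈ S2, ∃ q ∈ {p ∈ S2 | p.1 = 0},
      Tendsto (fun n => (V 0 b 0 d)^[n] p) atTop (𝓝 q) := by
  refine ⟨?_, fun p hp => ?_⟩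
  · exact Set.ext fun p => and_congr_right fun _ => V_zero_zero_eq_self_iff hb0.ne' d p
  · obtain ⟨ζ, hlim⟩ := exists_tendsto_iterate_V_zero_zero hb0 hb1 hd1 hd2 hp
    have hq : ((0 : ℝ), 1 - ζ, ζ) ∈ S2 := isClosed_S2.mem_of_tendsto hlim <|
      Eventually.of_forall fun n => (mapsTo_V_zero_zero_S2 hb0 hb1 hd1 hd2).iterate n hp
    exact ⟨_, ⟨hq, rfl⟩, hlim⟩

theorem stmt8 (b d : ℝ) (hb0 : 0 < b) (hb1 : b ≤ 1) (hd : d ≠ 0)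
    (hd1 : -(1 - b) ≤ d) (hd2 : d ≤ 1) :
    {p ∈ S2 | V 0 b 0 d p = p} = {p ∈ S2 | p.1 = 0} ∧
    ∀ p ∈ S2, ∃ q ∈ {p ∈ S2 | p.1 = 0},
      Tendsto (fun n => (V 0 b 0 d)^[n] p) atTop (𝓝 q) :=
  stmt8_general b d hb0 hb1 hd1 hd2
end

section
/- If c > a, d < b, and c + d ≥ 0, then the set E = {(x,y,z) ∈ S² : z ≥ (a+dx)/c} is invariant under V, i.e. V(E) ⊆ E. -/
open Filter Topology

/-!
Write `g(x, y, z) = c z - (a + d x)`, so that `E = {g ≥ 0}` inside the simplex. The map `V`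
preserves `x + y + z`, and a direct computation gives
`g(V p) = g(p) (1 - c y) + x (c + d) (b - d y)`.
On `E` one has `c y ≤ (c - a) - x (c + d) ≤ 1`, and `b - d y ≥ 0` because it is affine in
`y ∈ [0, 1]` with nonnegative values `b` and `b - d` at the endpoints; hence `g(V p) ≥ 0`.
The same endpoint argument gives `1 - b + d y ≥ 0`, which with `c y ≤ 1` keeps `V p` in the
simplex.
-/

lemma add_mul_nonneg_of_endpoints {R : Type*} [CommRing R] [LinearOrder R] [IsOrderedRing R]
    {u v y : R} (h0 : 0 ≤ u) (h1 : 0 ≤ u + v) (hy0 : 0 ≤ y) (hy1 : y ≤ 1) :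
    0 ≤ u + v * y := by
  have hcomb : u + v * y = (1 - y) * u + y * (u + v) := by ring
  rw [hcomb]
  exact add_nonneg (mul_nonneg (sub_nonneg.2 hy1) h0) (mul_nonneg hy0 h1)

lemma V_sum (a b c d : ℝ) (p : ℝ × ℝ × ℝ) :
    (V a b c d p).1 + (V a b c d p).2.1 + (V a b c d p).2.2 = p.1 + p.2.1 + p.2.2 := by
  simp only [V]
  ring

lemma V_defect (a b c d : ℝ) (p : ℝ × ℝ × ℝ) :
    (V a b c d p).2.2 * c - (a + d * (V a b c d p).1) =
      (p.2.2 * c - (a + d * p.1)) * (1 - c * p.2.1) + p.1 * (c + d) * (b - d * p.2.1) := by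
  simp only [V]
  ring

lemma mul_le_one_of_le_mul {a c d x y z : ℝ} (hx : 0 ≤ x) (hsum : x + y + z = 1)
    (hE : a + d * x ≤ z * c) (hc : c ≤ 1 + a) (hcd : 0 ≤ c + d) : c * y ≤ 1 := by
  have hy : c * y = c - c * x - z * c := by
    rw [show y = 1 - x - z by linarith]
    ring
  linarith [mul_nonneg hx hcd]

theorem stmt17_general (a b c d : ℝ) (ha0 : 0 ≤ a) (hb0 : 0 ≤ b) (hb1 : b ≤ 1)
    (hac : a < c) (hc : c ≤ 1 + a) (hd1 : -(1 - b) ≤ d) (hdb : d < b)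
    (hcd : 0 ≤ c + d) :
    Set.MapsTo (V a b c d) {p ∈ S2 | (a + d * p.1) / c ≤ p.2.2}
      {p ∈ S2 | (a + d * p.1) / c ≤ p.2.2} := by
  rintro ⟨x, y, z⟩ ⟨⟨hx, hy, hz, hsum⟩, hE⟩
  have hc0 : 0 < c := ha0.trans_lt hac
  rw [div_le_iff₀ hc0] at hE
  have hy1 : y ≤ 1 := by linarith
  have hcy : c * y ≤ 1 := mul_le_one_of_le_mul hx hsum hE hc hcd
  have hbdy : 0 ≤ 1 - b + d * y :=
    add_mul_nonneg_of_endpoints (sub_nonneg.2 hb1) (by linarith) hy hy1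
  have hdyb : 0 ≤ b - d * y := by
    have := add_mul_nonneg_of_endpoints (v := -d) hb0 (by linarith) hy hy1
    linarith
  refine ⟨⟨?_, ?_, ?_, (V_sum a b c d _).trans hsum⟩, (div_le_iff₀ hc0).2 (sub_nonneg.1 ?_)⟩
  · exact mul_nonneg hx hbdy
  · exact mul_nonneg hy (by linarith)
  · exact add_nonneg (add_nonneg (mul_nonneg hz (sub_nonneg.2 hcy)) (mul_nonneg ha0 hy))
      (mul_nonneg hb0 hx)
  · rw [V_defect]
    exact add_nonneg (mul_nonneg (sub_nonneg.2 hE) (sub_nonneg.2 hcy))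
      (mul_nonneg (mul_nonneg hx hcd) hdyb)

theorem stmt17 (a b c d : ℝ) (ha0 : 0 ≤ a) (ha1 : a ≤ 1) (hb0 : 0 ≤ b) (hb1 : b ≤ 1)
    (hac : a < c) (hc : c ≤ 1 + a) (hd1 : -(1 - b) ≤ d) (hdb : d < b)
    (hcd : 0 ≤ c + d) (hcne : c ≠ 0) (hdne : d ≠ 0) :
    Set.MapsTo (V a b c d) {p ∈ S2 | (a + d * p.1) / c ≤ p.2.2}
      {p ∈ S2 | (a + d * p.1) / c ≤ p.2.2} :=
  stmt17_general a b c d ha0 hb0 hb1 hac hc hd1 hdb hcd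
end
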